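/- Let Σ₃ = {a,b,c} and let w, w̃ ∈ Σ₃* with ι(w) = ι(w̃) = 1 < k such that |alph(α₀)| = |alph(α₁)| = 1 (both α-factors unary, their alphabets possibly equal or distinct). Assume m(w) ≠ 𝔴(w) and let y be the unique letter of Σ₃ outside {m(w)[1], 𝔴(w)[1]}. Then w ∼_k w̃ if and only if α_i ∼_{k−1} α̃_i for i ∈ {0,1}, m(w) = m(w̃), 𝔴(w) = 𝔴(w̃), and core₁ ∼_{k−c} corẽ₁, where c := δ_{y ⪯ α₀} + δ_{y ⪯ α₁}. -/

import Mathlib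

open List

variable {α : Type*} [DecidableEq α] [Fintype α]

/-- Simon `k`-congruence: `u` and `v` have the same scattered factors
(subsequences) of length at most `k`. -/
def SimonCongr (k : ℕ) (u v : List α) : Prop :=
  ∀ s : List α, s.length ≤ k → (s.Sublist u ↔ s.Sublist v)

/-- `w` is `k`-universal with respect to the alphabet `S`: every word of length `k`
over `S` is a scattered factor of `w`. -/
def UniversalOn (S : Finset α) (k : ℕ) (w : List α) : Prop :=
  ∀ s : List α, s.length = k → (∀ x ∈ s, x ∈ S) → s.Sublist w

/-- The universality index of `w` w.r.t. the alphabet `S`. -/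
noncomputable def iotaOn (S : Finset α) (w : List α) : ℕ :=
  sSup {k | UniversalOn S k w}

/-- The universality index of `w` w.r.t. the full alphabet. -/
noncomputable def iotaUniv (w : List α) : ℕ := iotaOn Finset.univ w

/-- `a` is an arch w.r.t. `S`: it contains every letter of `S`, and its last letter
belongs to `S` and occurs exactly once in `a`. -/
def IsArchOn (S : Finset α) (a : List α) : Prop :=
  (∀ x ∈ S, x ∈ a) ∧ ∃ a' x, a = a' ++ [x] ∧ x ∈ S ∧ x ∉ a'

/-- `(ars, r)` is the arch factorization of `w` w.r.t. `S`. -/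
def IsArchFactOn (S : Finset α) (w : List α) (ars : List (List α)) (r : List α) : Prop :=
  w = ars.flatten ++ r ∧ (∀ a ∈ ars, IsArchOn S a) ∧ ¬ (∀ x ∈ S, x ∈ r)

/-- `(A, B)` is the α-β-factorization of `w` with `m` arches:
`αᵢ₋₁βᵢ` (for `i ∈ [m]`) together with rest `α_m` is the arch factorization of `w`, and
`(β_{m-i}α_{m-i})^R` together with rest `α₀^R` is the arch factorization of `w^R`. -/
def IsAlphaBetaFact (w : List α) (m : ℕ) (A B : ℕ → List α) : Prop :=
  IsArchFactOn Finset.univ w (List.ofFn fun i : Fin m => A i.val ++ B (i.val + 1)) (A m) ∧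
  IsArchFactOn Finset.univ w.reverse
    (List.ofFn fun i : Fin m => (B (m - i.val) ++ A (m - i.val)).reverse) ((A 0).reverse)

/-- The concatenation `αᵢ βᵢ₊₁ αᵢ₊₁ ⋯ βⱼ αⱼ`. -/
def abSeg (A B : ℕ → List α) (i j : ℕ) : List α :=
  A i ++ (((List.Ico (i + 1) (j + 1)).map fun l => B l ++ A l).flatten)

/-- The core of a `β`-factor: the factor with its first and last letter removed. -/
def coreOf (b : List α) : List α := (b.drop 1).dropLast

/-!
Here `w = xᵖ · v yʳ m · z^q` with `x ∈ {v, y}` and `z ∈ {m, y}`, where `v` and `m` are the reverse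
modus and the modus. Scattered factors of length two already force every one-arch word `w' ∼ₖ w`
into the same shape: `[m, v]` does not occur, which rules out the other orders of the three
letters, and `[b, v]`, `[m, b]` occur exactly for the letters `b` of `α₀`, `α₁` respectively.

What is left is a comparison of exponents. A block `aⁿ` between `u` and `t` can be shortened to
`k - c` letters without changing the scattered factors of length `≤ k`, where `c` counts how many
of `u`, `t` contain `a`: a factor using more copies of `a` leaves no room for letters from a
neighbour that contains `a`, which therefore can supply the extra copy. Conversely the probes
`xⁿ v`, `m zⁿ` and `yⁿ` (preceded by `v` if `x = y`, followed by `m` if `z = y`) occur exactly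
when `n` is at most the exponent, so `∼ₖ` detects every exponent up to its threshold.
-/

namespace SimonCongr

variable {β : Type*} {k : ℕ} {u v w : List β}

theorem refl (k : ℕ) (u : List β) : SimonCongr k u u := fun _ _ => Iff.rfl

theorem symm (h : SimonCongr k u v) : SimonCongr k v u := fun s hs => (h s hs).symm

theorem trans (h₁ : SimonCongr k u v) (h₂ : SimonCongr k v w) : SimonCongr k u w :=
  fun s hs => (h₁ s hs).trans (h₂ s hs)

theorem mono {k' : ℕ} (hk : k' ≤ k) (h : SimonCongr k u v) : SimonCongr k' u v :=
  fun s hs => h s (hs.trans hk)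

theorem mem_iff (hk : 1 ≤ k) (h : SimonCongr k u v) (a : β) : a ∈ u ↔ a ∈ v := by
  simpa using h [a] (by simpa using hk)

theorem pair_iff (hk : 2 ≤ k) (h : SimonCongr k u v) (a b : β) : [a, b] <+ u ↔ [a, b] <+ v :=
  h [a, b] (by simpa using hk)

theorem min_eq_of_probe {d a b : ℕ} (s : ℕ → List β) (hs : ∀ n, (s n).length = n + d)
    (hu : ∀ n, s n <+ u ↔ n ≤ a) (hv : ∀ n, s n <+ v ↔ n ≤ b) (hd : d ≤ k)
    (h : SimonCongr k u v) : min a (k - d) = min b (k - d) := by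
  have key : ∀ n ≤ k - d, n ≤ a ↔ n ≤ b := fun n hn => by
    rw [← hu, ← hv]
    exact h _ (by rw [hs]; omega)
  have := key (min a (k - d)) (min_le_right _ _)
  have := key (min b (k - d)) (min_le_right _ _)
  omega

end SimonCongr

section Absorption

variable {β : Type*} [DecidableEq β] {k p p' : ℕ} {u t : List β} {a : β}

theorem sublist_of_sublist_append_replicate_succ_append
    (hp : k ≤ p + ((if a ∈ u then 1 else 0) + (if a ∈ t then 1 else 0)))
    {s : List β} (hs : s.length ≤ k) (h : s <+ u ++ replicate (p + 1) a ++ t) :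
    s <+ u ++ replicate p a ++ t := by
  obtain ⟨l, s₂, rfl, hl, h₂⟩ := sublist_append_iff.mp h
  obtain ⟨s₁, l', rfl, h₁, hl'⟩ := sublist_append_iff.mp hl
  obtain ⟨i, hi, rfl⟩ := sublist_replicate_iff.mp hl'
  by_cases hi' : i ≤ p
  · exact (h₁.append ((replicate_sublist_replicate a).2 hi')).append h₂
  obtain rfl : i = p + 1 := by omega
  simp only [length_append, length_replicate] at hs
  by_cases hat : a ∈ t ∧ s₂ = []
  · rw [hat.2, append_nil, replicate_succ', ← append_assoc]
    exact (h₁.append (Sublist.refl _)).append (singleton_sublist.2 hat.1)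
  by_cases hau : a ∈ u ∧ s₁ = []
  · rw [hau.2, nil_append, replicate_succ, ← singleton_append]
    exact ((singleton_sublist.2 hau.1).append (Sublist.refl _)).append h₂
  -- otherwise every neighbour containing `a` contributes a letter to `s`, which is then too long
  have hu' : (if a ∈ u then 1 else 0) ≤ s₁.length := by
    split_ifs with ha
    · exact length_pos_iff.2 fun h => hau ⟨ha, h⟩
    · exact Nat.zero_le _
  have ht' : (if a ∈ t then 1 else 0) ≤ s₂.length := by
    split_ifs with ha
    · exact length_pos_iff.2 fun h => hat ⟨ha, h⟩
    · exact Nat.zero_le _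
  omega

theorem simonCongr_append_replicate_succ_append
    (hp : k ≤ p + ((if a ∈ u then 1 else 0) + (if a ∈ t then 1 else 0))) :
    SimonCongr k (u ++ replicate (p + 1) a ++ t) (u ++ replicate p a ++ t) := fun _ hs =>
  ⟨sublist_of_sublist_append_replicate_succ_append hp hs, fun h =>
    h.trans (((Sublist.refl u).append ((replicate_sublist_replicate a).2 (by omega))).append
      (Sublist.refl t))⟩

theorem simonCongr_append_replicate_append
    (h : min p (k - ((if a ∈ u then 1 else 0) + (if a ∈ t then 1 else 0)))
      = min p' (k - ((if a ∈ u then 1 else 0) + (if a ∈ t then 1 else 0)))) :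
    SimonCongr k (u ++ replicate p a ++ t) (u ++ replicate p' a ++ t) := by
  set c := (if a ∈ u then 1 else 0) + (if a ∈ t then 1 else 0)
  have key : ∀ n, k - c ≤ n →
      SimonCongr k (u ++ replicate n a ++ t) (u ++ replicate (k - c) a ++ t) := by
    intro n hn
    induction n, hn using Nat.le_induction with
    | base => exact .refl _ _
    | succ n hn ih => exact (simonCongr_append_replicate_succ_append (by omega)).trans ih
  by_cases hp : k - c ≤ p
  · exact (key p hp).trans (key p' (by omega)).symm
  · obtain rfl : p = p' := by omega
    exact .refl _ _

theorem simonCongr_replicate_iff {a b : ℕ} (x : β) :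
    SimonCongr k (replicate a x) (replicate b x) ↔ min a k = min b k := by
  constructor
  · intro h
    simpa using h.min_eq_of_probe (d := 0) (fun n => replicate n x) (by simp)
      (fun _ => replicate_sublist_replicate x) (fun _ => replicate_sublist_replicate x)
      (Nat.zero_le _)
  · intro h
    simpa using simonCongr_append_replicate_append (u := []) (t := []) (a := x) (by simpa using h)

end Absorption

section Words

variable {β : Type*} {a b : β} {s u t : List β}

theorem pair_sublist_append (ha : a ∈ u) (hb : b ∈ t) : [a, b] <+ u ++ t :=
  (singleton_sublist.2 ha).append (singleton_sublist.2 hb)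

theorem cons_sublist_append_cons_iff (ha : a ∉ u) : a :: s <+ u ++ a :: t ↔ s <+ t := by
  induction u with
  | nil => exact cons_sublist_cons
  | cons b u ih =>
    rw [mem_cons, not_or] at ha
    rw [cons_append, sublist_cons_iff, ih ha.2]
    simp [ha.1]

theorem append_singleton_sublist_append_cons_iff (ha : a ∉ t) :
    s ++ [a] <+ u ++ a :: t ↔ s <+ u := by
  rw [← reverse_sublist, ← reverse_sublist (l₁ := s)]
  simpa using cons_sublist_append_cons_iff (s := s.reverse) (t := u.reverse) (mem_reverse.not.2 ha)

theorem exists_eq_replicate_of_card_toFinset_eq_one [DecidableEq β] {l : List β}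
    (h : l.toFinset.card = 1) : ∃ x p, p ≠ 0 ∧ l = replicate p x := by
  obtain ⟨x, hx⟩ := Finset.card_eq_one.1 h
  refine ⟨x, l.length, fun h0 => by simp [length_eq_zero_iff.1 h0] at h,
    eq_replicate_of_mem fun b hb => ?_⟩
  simpa [hx] using mem_toFinset.2 hb

theorem coreOf_cons_append_singleton (a b : β) (l : List β) :
    coreOf (a :: (l ++ [b])) = l := by
  simp [coreOf]

end Words

section ArchWord

variable {β : Type*} {A₀ A₁ : List β} {v y m a b : β} {r : ℕ}

def archWord (A₀ : List β) (v y m : β) (r : ℕ) (A₁ : List β) : List β :=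
  A₀ ++ v :: (replicate r y ++ m :: A₁)

/-- `A₀ · v yʳ m · A₁` is the α-β-factorisation `α₀ β₁ α₁` of a word with exactly one arch over
the alphabet `{v, y, m}`: `A₀ v yʳ m` is an arch and `v yʳ m A₁` a reverse arch. -/
structure OneArchShape (A₀ : List β) (v y m : β) (r : ℕ) (A₁ : List β) : Prop where
  v_ne_m : v ≠ m
  y_ne_v : y ≠ v
  y_ne_m : y ≠ m
  m_notMem : m ∉ A₀
  v_notMem : v ∉ A₁
  y_mem_left : y ∈ A₀ ∨ r ≠ 0
  y_mem_right : y ∈ A₁ ∨ r ≠ 0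

theorem archWord_eq_left (A₀ : List β) (v y m : β) (r : ℕ) (A₁ : List β) :
    archWord A₀ v y m r A₁ = (A₀ ++ [v]) ++ (replicate r y ++ m :: A₁) := by
  simp [archWord]

theorem archWord_eq_right (A₀ : List β) (v y m : β) (r : ℕ) (A₁ : List β) :
    archWord A₀ v y m r A₁ = (A₀ ++ v :: replicate r y) ++ m :: A₁ := by
  simp [archWord]

theorem v_m_sublist_archWord : [v, m] <+ archWord A₀ v y m r A₁ := by
  rw [archWord_eq_left]
  exact pair_sublist_append (by simp) (by simp)

theorem y_y_sublist_archWord_of_mem_left (hy : y ∈ A₀) (hr : r ≠ 0) :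
    [y, y] <+ archWord A₀ v y m r A₁ := by
  rw [archWord_eq_left]
  exact pair_sublist_append (by simp [hy]) (by simp [hr])

theorem y_y_sublist_archWord_of_mem_right (hy : y ∈ A₁) (hr : r ≠ 0) :
    [y, y] <+ archWord A₀ v y m r A₁ := by
  rw [archWord_eq_right]
  exact pair_sublist_append (by simp [hr]) (by simp [hy])

namespace OneArchShape

theorem pair_m_sublist_iff (h : OneArchShape A₀ v y m r A₁) :
    [m, b] <+ archWord A₀ v y m r A₁ ↔ b ∈ A₁ := by
  have hm : m ∉ A₀ ++ v :: replicate r y := by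
    simp [h.m_notMem, h.v_ne_m.symm, mem_replicate, h.y_ne_m.symm]
  rw [archWord_eq_right, cons_sublist_append_cons_iff hm, singleton_sublist]

theorem pair_v_sublist_iff (h : OneArchShape A₀ v y m r A₁) :
    [a, v] <+ archWord A₀ v y m r A₁ ↔ a ∈ A₀ := by
  have hv : v ∉ replicate r y ++ m :: A₁ := by
    simp [h.v_notMem, h.v_ne_m, mem_replicate, h.y_ne_v.symm]
  rw [archWord, ← singleton_append, append_singleton_sublist_append_cons_iff hv, singleton_sublist]

theorem v_y_sublist (h : OneArchShape A₀ v y m r A₁) : [v, y] <+ archWord A₀ v y m r A₁ := by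
  rw [archWord_eq_left]
  refine pair_sublist_append (by simp) ?_
  rcases h.y_mem_right with hy | hr <;> simp [*]

theorem y_m_sublist (h : OneArchShape A₀ v y m r A₁) : [y, m] <+ archWord A₀ v y m r A₁ := by
  rw [archWord_eq_right]
  refine pair_sublist_append ?_ (by simp)
  rcases h.y_mem_left with hy | hr <;> simp [*]

end OneArchShape

end ArchWord

namespace Fin3

theorem exists_ne_ne (a b : Fin 3) : ∃ c, c ≠ a ∧ c ≠ b := by
  decide +revert

theorem eq_of_ne_of_ne {v y m b : Fin 3} (hvm : v ≠ m) (hyv : y ≠ v) (hym : y ≠ m)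
    (hbv : b ≠ v) (hbm : b ≠ m) : b = y := by
  decide +revert

theorem eq_or_eq_of_ne {v y m b : Fin 3} (hvm : v ≠ m) (hyv : y ≠ v) (hym : y ≠ m)
    (hbm : b ≠ m) : b = v ∨ b = y := by
  decide +revert

theorem pair_cases {v y m v' y' m' : Fin 3} (hvm : v ≠ m) (hyv : y ≠ v) (hym : y ≠ m)
    (hvm' : v' ≠ m') (hyv' : y' ≠ v') (hym' : y' ≠ m')
    (h₁ : ¬ (m = v' ∧ v = m')) (h₂ : ¬ (m = v' ∧ v = y')) (h₃ : ¬ (m = y' ∧ v = m')) :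
    (v = v' ∧ m = m') ∨ (v = v' ∧ m = y' ∧ y = m') ∨ (m = m' ∧ v = y' ∧ y = v') := by
  decide +revert

end Fin3

section PairCases

variable {A₀ A₁ A₀' A₁' : List (Fin 3)} {v y m v' y' m' : Fin 3} {r r' : ℕ}

theorem OneArchShape.eq_of_simonCongr_two (hS : OneArchShape A₀ v y m r A₁)
    (hS' : OneArchShape A₀' v' y' m' r' A₁') (hA₀ : ∀ a ∈ A₀, ∀ b ∈ A₀, a = b)
    (hA₁ : ∀ a ∈ A₁, ∀ b ∈ A₁, a = b)
    (h : SimonCongr 2 (archWord A₀ v y m r A₁) (archWord A₀' v' y' m' r' A₁')) :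
    v' = v ∧ m' = m := by
  have hmv : ¬ [m, v] <+ archWord A₀' v' y' m' r' A₁' := fun hmv =>
    hS.v_notMem (hS.pair_m_sublist_iff.1 ((h.pair_iff le_rfl _ _).2 hmv))
  rcases Fin3.pair_cases hS.v_ne_m hS.y_ne_v hS.y_ne_m hS'.v_ne_m hS'.y_ne_v hS'.y_ne_m
    (fun ⟨h₁, h₂⟩ => hmv (by rw [h₁, h₂]; exact v_m_sublist_archWord))
    (fun ⟨h₁, h₂⟩ => hmv (by rw [h₁, h₂]; exact hS'.v_y_sublist))
    (fun ⟨h₁, h₂⟩ => hmv (by rw [h₁, h₂]; exact hS'.y_m_sublist)) with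
    ⟨hv, hm⟩ | ⟨rfl, rfl, rfl⟩ | ⟨rfl, rfl, rfl⟩
  · exact ⟨hv.symm, hm.symm⟩
  -- In the two remaining cases `y'` lies in the core of `w'` and in one of its α-factors, so
  -- `[y', y']` and a pair of the primed arch put two distinct letters into a unary α-factor of `w`.
  · have hr' : r' ≠ 0 := hS'.y_mem_left.resolve_left fun hm => hmv (hS'.pair_v_sublist_iff.2 hm)
    have hmA₁' : m ∈ A₁' := hS'.pair_m_sublist_iff.1 ((h.pair_iff le_rfl _ _).1 hS.y_m_sublist)
    have hmA₁ : m ∈ A₁ := hS.pair_m_sublist_iff.1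
      ((h.pair_iff le_rfl _ _).2 (y_y_sublist_archWord_of_mem_right hmA₁' hr'))
    have hyA₁ : y ∈ A₁ := hS.pair_m_sublist_iff.1 ((h.pair_iff le_rfl _ _).2 hS'.y_m_sublist)
    exact absurd (hA₁ _ hyA₁ _ hmA₁) hS.y_ne_m
  · have hr' : r' ≠ 0 := hS'.y_mem_right.resolve_left fun hv => hmv (hS'.pair_m_sublist_iff.2 hv)
    have hvA₀' : v ∈ A₀' := hS'.pair_v_sublist_iff.1 ((h.pair_iff le_rfl _ _).1 hS.v_y_sublist)
    have hvA₀ : v ∈ A₀ := hS.pair_v_sublist_iff.1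
      ((h.pair_iff le_rfl _ _).2 (y_y_sublist_archWord_of_mem_left hvA₀' hr'))
    have hyA₀ : y ∈ A₀ := hS.pair_v_sublist_iff.1 ((h.pair_iff le_rfl _ _).2 hS'.v_y_sublist)
    exact absurd (hA₀ _ hyA₀ _ hvA₀) hS.y_ne_v

end PairCases

theorem IsAlphaBetaFact.singleton_or_archWord {w : List (Fin 3)} {A B : ℕ → List (Fin 3)}
    (hw : IsAlphaBetaFact w 1 A B) :
    (∃ c, B 1 = [c] ∧ ∀ a b, a ≠ b → [a, b] <+ w) ∨
    ∃ v y m r, B 1 = v :: (replicate r y ++ [m]) ∧ OneArchShape (A 0) v y m r (A 1) ∧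
      w = archWord (A 0) v y m r (A 1) := by
  obtain ⟨⟨hw, harch, -⟩, ⟨-, harch', hrest'⟩⟩ := hw
  simp only [IsArchOn, ofFn_succ, ofFn_zero, Fin.val_zero, Nat.sub_zero, zero_add, flatten_cons,
    flatten_nil, append_nil, mem_singleton, forall_eq, Finset.mem_univ, forall_const, true_and,
    reverse_append, mem_append, mem_reverse] at hw harch harch' hrest'
  obtain ⟨hall, a', m₀, heq, hm⟩ := harch
  obtain ⟨hall', b', v₀, heq', hv⟩ := harch'
  obtain ⟨e, he⟩ : ∃ e, e ∉ A 0 := by simpa using hrest'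
  obtain ⟨v, t, hB⟩ : ∃ v t, B 1 = v :: t := by
    cases hB : B 1 with
    | nil => exact absurd ((hall e).resolve_right (by simp [hB])) he
    | cons v t => exact ⟨v, t, rfl⟩
  obtain ⟨rfl, rfl⟩ : (A 1).reverse ++ t.reverse = b' ∧ v = v₀ := by
    rw [hB, reverse_cons, ← append_assoc] at heq'
    simpa using append_inj' heq' rfl
  simp only [mem_append, mem_reverse, not_or] at hv
  rcases eq_nil_or_concat' t with rfl | ⟨mid, m, rfl⟩
  · refine .inl ⟨v, hB, fun a b hab => ?_⟩
    have hb : b ∈ A 1 ∨ b = v := by simpa [hB] using hall' b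
    rw [hw, hB]
    by_cases hav : a = v
    · subst hav
      exact pair_sublist_append (by simp) (hb.resolve_right hab.symm)
    · have ha : a ∈ A 0 := by simpa [hB, hav] using hall a
      rw [append_assoc]
      exact pair_sublist_append ha (by simpa [or_comm] using hb)
  obtain ⟨rfl, rfl⟩ : A 0 ++ v :: mid = a' ∧ m = m₀ := by
    rw [hB, ← cons_append, ← append_assoc] at heq
    simpa using append_inj' heq rfl
  simp only [mem_append, mem_cons, not_or] at hm hv
  obtain ⟨y, hyv, hym⟩ := Fin3.exists_ne_ne v m
  have hmid : mid = replicate mid.length y := eq_replicate_of_mem fun b hb =>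
    Fin3.eq_of_ne_of_ne (Ne.symm hm.2.1) hyv hym (fun h => hv.2.1 (h ▸ hb))
      (fun h => hm.2.2 (h ▸ hb))
  rw [hmid] at hB
  refine .inr ⟨v, y, m, mid.length, hB, ⟨Ne.symm hm.2.1, hyv, hym, hm.1, hv.1, ?_, ?_⟩, ?_⟩
  · simpa [hB, hyv, hym] using hall y
  · simpa [hB, hyv, hym] using hall' y
  · rw [hw, hB, archWord]
    simp

section Unary

variable {β : Type*} {x v y m z : β} {k p r q p' r' q' : ℕ}

structure IsUnaryArch (x v y m z : β) (p r q : ℕ) : Prop where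
  shape : OneArchShape (replicate p x) v y m r (replicate q z)
  x_eq : x = v ∨ x = y
  z_eq : z = m ∨ z = y
  p_ne_zero : p ≠ 0
  q_ne_zero : q ≠ 0

namespace IsUnaryArch

theorem y_mem_left_iff (h : IsUnaryArch x v y m z p r q) : y ∈ replicate p x ↔ x = y := by
  simp [mem_replicate, h.p_ne_zero, eq_comm]

theorem y_mem_right_iff (h : IsUnaryArch x v y m z p r q) : y ∈ replicate q z ↔ z = y := by
  simp [mem_replicate, h.q_ne_zero, eq_comm]

theorem probe_left_iff (h : IsUnaryArch x v y m z p r q) (n : ℕ) :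
    replicate n x ++ [v] <+ archWord (replicate p x) v y m r (replicate q z) ↔ n ≤ p := by
  have hv : v ∉ replicate r y ++ m :: replicate q z := by
    simp [mem_replicate, h.shape.y_ne_v.symm, h.shape.v_ne_m, h.shape.v_notMem]
  rw [archWord, append_singleton_sublist_append_cons_iff hv, replicate_sublist_replicate]

theorem probe_right_iff (h : IsUnaryArch x v y m z p r q) (n : ℕ) :
    m :: replicate n z <+ archWord (replicate p x) v y m r (replicate q z) ↔ n ≤ q := by
  have hm : m ∉ replicate p x ++ v :: replicate r y := by
    simp [mem_replicate, h.shape.y_ne_m.symm, h.shape.v_ne_m.symm, h.shape.m_notMem]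
  rw [archWord_eq_right, cons_sublist_append_cons_iff hm, replicate_sublist_replicate]

theorem probe_mid_iff [DecidableEq β] (h : IsUnaryArch x v y m z p r q) (n : ℕ) :
    (if x = y then [v] else []) ++ replicate n y ++ (if z = y then [m] else [])
      <+ archWord (replicate p x) v y m r (replicate q z) ↔ n ≤ r := by
  have hyv := h.shape.y_ne_v
  have hym := h.shape.y_ne_m
  by_cases hx : x = y <;> by_cases hz : z = y
  · subst hx hz
    rw [if_pos rfl, if_pos rfl, singleton_append, cons_append, archWord,
      cons_sublist_append_cons_iff (by simp [mem_replicate, hyv.symm]),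
      append_singleton_sublist_append_cons_iff (by simp [mem_replicate, hym.symm]),
      replicate_sublist_replicate]
  · subst hx
    rw [if_pos rfl, if_neg hz, append_nil, singleton_append, archWord,
      cons_sublist_append_cons_iff (by simp [mem_replicate, hyv.symm]), replicate_sublist_iff]
    simp [count_replicate, hym.symm, hz]
  · subst hz
    rw [if_neg hx, if_pos rfl, nil_append, archWord_eq_right,
      append_singleton_sublist_append_cons_iff (by simp [mem_replicate, hym.symm]),
      replicate_sublist_iff]
    simp [count_replicate, hyv.symm, hx]
  · rw [if_neg hx, if_neg hz, nil_append, append_nil, replicate_sublist_iff]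
    simp [archWord, count_replicate, hyv.symm, hym.symm, hx, hz]

theorem min_eq_of_simonCongr [DecidableEq β] (h : IsUnaryArch x v y m z p r q)
    (h' : IsUnaryArch x v y m z p' r' q') (hk : 2 ≤ k)
    (hc : SimonCongr k (archWord (replicate p x) v y m r (replicate q z))
      (archWord (replicate p' x) v y m r' (replicate q' z))) :
    min p (k - 1) = min p' (k - 1) ∧
      min r (k - ((if x = y then 1 else 0) + (if z = y then 1 else 0))) =
        min r' (k - ((if x = y then 1 else 0) + (if z = y then 1 else 0))) ∧
      min q (k - 1) = min q' (k - 1) := by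
  refine ⟨hc.min_eq_of_probe _ (fun n => by simp) h.probe_left_iff h'.probe_left_iff (by omega),
    hc.min_eq_of_probe _ (fun n => ?_) h.probe_mid_iff h'.probe_mid_iff (by split_ifs <;> omega),
    hc.min_eq_of_probe _ (fun n => by simp) h.probe_right_iff h'.probe_right_iff (by omega)⟩
  split_ifs <;> simp

theorem simonCongr_of_min_eq [DecidableEq β] (h : IsUnaryArch x v y m z p r q)
    (h' : IsUnaryArch x v y m z p' r' q') (hp : min p (k - 1) = min p' (k - 1))
    (hr : min r (k - ((if x = y then 1 else 0) + (if z = y then 1 else 0))) =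
      min r' (k - ((if x = y then 1 else 0) + (if z = y then 1 else 0))))
    (hq : min q (k - 1) = min q' (k - 1)) :
    SimonCongr k (archWord (replicate p x) v y m r (replicate q z))
      (archWord (replicate p' x) v y m r' (replicate q' z)) := by
  have hmid : SimonCongr k (archWord (replicate p x) v y m r (replicate q z))
      (archWord (replicate p x) v y m r' (replicate q z)) := by
    have hu : y ∈ replicate p x ++ [v] ↔ x = y := by
      simp [h.y_mem_left_iff, h.shape.y_ne_v]
    have ht : y ∈ m :: replicate q z ↔ z = y := by
      simp [h.y_mem_right_iff, h.shape.y_ne_m]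
    simpa [archWord] using simonCongr_append_replicate_append (u := replicate p x ++ [v])
      (t := m :: replicate q z) (a := y) (by simpa only [hu, ht] using hr)
  have hright : SimonCongr k (archWord (replicate p x) v y m r' (replicate q z))
      (archWord (replicate p x) v y m r' (replicate q' z)) := by
    have hu : z ∈ replicate p x ++ v :: (replicate r' y ++ [m]) := by
      rcases h.z_eq with rfl | rfl
      · simp
      · rcases h'.shape.y_mem_left.imp_left h'.y_mem_left_iff.1 with hx | hr'
        · simp [h.y_mem_left_iff.2 hx]
        · simp [hr']
    simpa [archWord] using simonCongr_append_replicate_append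
      (u := replicate p x ++ v :: (replicate r' y ++ [m])) (t := []) (a := z)
      (by simpa [hu] using hq)
  have hleft : SimonCongr k (archWord (replicate p x) v y m r' (replicate q' z))
      (archWord (replicate p' x) v y m r' (replicate q' z)) := by
    have ht : x ∈ v :: (replicate r' y ++ m :: replicate q' z) := by
      rcases h.x_eq with rfl | rfl
      · simp
      · rcases h'.shape.y_mem_right with hy | hr'
        · simp [hy]
        · simp [hr']
    simpa [archWord] using simonCongr_append_replicate_append
      (u := []) (t := v :: (replicate r' y ++ m :: replicate q' z)) (a := x)
      (by simpa [ht] using hp)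
  exact hmid.trans (hright.trans hleft)

theorem exists_of_oneArchShape {A₀' A₁' : List β} (h : IsUnaryArch x v y m z p r q)
    (hS' : OneArchShape A₀' v y m r' A₁') (hA₀ : ∀ b, b ∈ A₀' ↔ b = x)
    (hA₁ : ∀ b, b ∈ A₁' ↔ b = z) :
    ∃ p' q', A₀' = replicate p' x ∧ A₁' = replicate q' z ∧ IsUnaryArch x v y m z p' r' q' := by
  obtain ⟨p', rfl⟩ : ∃ p', A₀' = replicate p' x :=
    ⟨_, eq_replicate_of_mem fun b hb => (hA₀ b).1 hb⟩
  obtain ⟨q', rfl⟩ : ∃ q', A₁' = replicate q' z :=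
    ⟨_, eq_replicate_of_mem fun b hb => (hA₁ b).1 hb⟩
  exact ⟨p', q', rfl, rfl, hS', h.x_eq, h.z_eq, (mem_replicate.1 ((hA₀ x).2 rfl)).1,
    (mem_replicate.1 ((hA₁ z).2 rfl)).1⟩

end IsUnaryArch

end Unary

section Ternary

variable {x v y m z : Fin 3} {p r q : ℕ} {w' : List (Fin 3)} {A' B' : ℕ → List (Fin 3)}

theorem OneArchShape.isUnaryArch (hS : OneArchShape (replicate p x) v y m r (replicate q z))
    (hp : p ≠ 0) (hq : q ≠ 0) : IsUnaryArch x v y m z p r q :=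
  ⟨hS, Fin3.eq_or_eq_of_ne hS.v_ne_m hS.y_ne_v hS.y_ne_m fun hx => hS.m_notMem (by simp [hx, hp]),
    Fin3.eq_or_eq_of_ne hS.v_ne_m.symm hS.y_ne_m hS.y_ne_v fun hz => hS.v_notMem (by simp [hz, hq]),
    hp, hq⟩

theorem IsUnaryArch.exists_of_simonCongr_two (h : IsUnaryArch x v y m z p r q)
    (hw' : IsAlphaBetaFact w' 1 A' B')
    (hc : SimonCongr 2 (archWord (replicate p x) v y m r (replicate q z)) w') :
    ∃ p' r' q', IsUnaryArch x v y m z p' r' q' ∧ A' 0 = replicate p' x ∧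
      A' 1 = replicate q' z ∧ B' 1 = v :: (replicate r' y ++ [m]) ∧
      w' = archWord (replicate p' x) v y m r' (replicate q' z) := by
  rcases hw'.singleton_or_archWord with ⟨c, -, hpairs⟩ | ⟨v', y', m', r', hB', hS', rfl⟩
  · exact absurd (h.shape.pair_m_sublist_iff.1 ((hc.pair_iff le_rfl m v).2
      (hpairs m v h.shape.v_ne_m.symm))) h.shape.v_notMem
  have unary {n : ℕ} {c : Fin 3} : ∀ a ∈ replicate n c, ∀ b ∈ replicate n c, a = b :=
    fun a ha b hb => (eq_of_mem_replicate ha).trans (eq_of_mem_replicate hb).symm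
  obtain ⟨rfl, rfl⟩ := h.shape.eq_of_simonCongr_two hS' unary unary hc
  obtain rfl : y' = y := Fin3.eq_of_ne_of_ne h.shape.v_ne_m h.shape.y_ne_v h.shape.y_ne_m
    hS'.y_ne_v hS'.y_ne_m
  have hA₀ (b : Fin 3) : b ∈ A' 0 ↔ b = x := by
    rw [← hS'.pair_v_sublist_iff, ← hc.pair_iff le_rfl, h.shape.pair_v_sublist_iff,
      mem_replicate, and_iff_right h.p_ne_zero]
  have hA₁ (b : Fin 3) : b ∈ A' 1 ↔ b = z := by
    rw [← hS'.pair_m_sublist_iff, ← hc.pair_iff le_rfl, h.shape.pair_m_sublist_iff,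
      mem_replicate, and_iff_right h.q_ne_zero]
  obtain ⟨p', q', hA₀', hA₁', hU'⟩ := h.exists_of_oneArchShape hS' hA₀ hA₁
  exact ⟨p', r', q', hU', hA₀', hA₁', hB', by rw [hA₀', hA₁']⟩

theorem IsUnaryArch.exists_of_head_getLast (h : IsUnaryArch x v y m z p r q)
    (hw' : IsAlphaBetaFact w' 1 A' B') (hv : (B' 1).head? = some v)
    (hm : (B' 1).getLast? = some m) (hA₀ : ∀ b, b ∈ A' 0 ↔ b = x)
    (hA₁ : ∀ b, b ∈ A' 1 ↔ b = z) :
    ∃ p' r' q', IsUnaryArch x v y m z p' r' q' ∧ A' 0 = replicate p' x ∧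
      A' 1 = replicate q' z ∧ B' 1 = v :: (replicate r' y ++ [m]) ∧
      w' = archWord (replicate p' x) v y m r' (replicate q' z) := by
  rcases hw'.singleton_or_archWord with ⟨c, hc, -⟩ | ⟨v', y', m', r', hB', hS', rfl⟩
  · simp only [hc, head?_cons, getLast?_singleton, Option.some_inj] at hv hm
    exact absurd (hv.symm.trans hm) h.shape.v_ne_m
  rw [hB', ← cons_append] at hm
  simp only [hB', head?_cons, getLast?_concat, Option.some_inj] at hv hm
  subst hv hm
  obtain rfl : y' = y := Fin3.eq_of_ne_of_ne h.shape.v_ne_m h.shape.y_ne_v h.shape.y_ne_m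
    hS'.y_ne_v hS'.y_ne_m
  obtain ⟨p', q', hA₀', hA₁', hU'⟩ := h.exists_of_oneArchShape hS' hA₀ hA₁
  exact ⟨p', r', q', hU', hA₀', hA₁', hB', by rw [hA₀', hA₁']⟩

end Ternary

theorem ternary_both_alpha_unary_congr_general (k : ℕ) (hk : 1 < k)
    (w w' : List (Fin 3)) (A B A' B' : ℕ → List (Fin 3))
    (hw : IsAlphaBetaFact w 1 A B) (hw' : IsAlphaBetaFact w' 1 A' B')
    (hcard₀ : (A 0).toFinset.card = 1) (hcard₁ : (A 1).toFinset.card = 1)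
    (mw ww : Fin 3)
    (hm : (B 1).getLast? = some mw) (hrm : (B 1).head? = some ww)
    (hne : mw ≠ ww)
    (y : Fin 3) (hy1 : y ≠ mw) (hy2 : y ≠ ww) :
    SimonCongr k w w' ↔
      (SimonCongr (k - 1) (A 0) (A' 0) ∧ SimonCongr (k - 1) (A 1) (A' 1) ∧
        (B 1).getLast? = (B' 1).getLast? ∧ (B 1).head? = (B' 1).head? ∧
        SimonCongr (k - ((if y ∈ A 0 then 1 else 0) + (if y ∈ A 1 then 1 else 0)))
          (coreOf (B 1)) (coreOf (B' 1))) := by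
  rcases hw.singleton_or_archWord with ⟨c, hc, -⟩ | ⟨v, y₀, m, r, hB, hS, rfl⟩
  · simp only [hc, head?_cons, getLast?_singleton, Option.some_inj] at hm hrm
    exact absurd (hm.symm.trans hrm) hne
  rw [hB, ← cons_append] at hm
  simp only [hB, head?_cons, getLast?_concat, Option.some_inj] at hm hrm
  subst hm hrm
  obtain rfl : y = y₀ := Fin3.eq_of_ne_of_ne hS.v_ne_m hS.y_ne_v hS.y_ne_m hy2 hy1
  obtain ⟨x, p, hp, hA₀⟩ := exists_eq_replicate_of_card_toFinset_eq_one hcard₀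
  obtain ⟨z, q, hq, hA₁⟩ := exists_eq_replicate_of_card_toFinset_eq_one hcard₁
  rw [hA₀, hA₁] at hS ⊢
  have hU := hS.isUnaryArch hp hq
  simp only [hB, hU.y_mem_left_iff, hU.y_mem_right_iff, coreOf_cons_append_singleton]
  constructor
  · intro h
    obtain ⟨p', r', q', hU', hA₀', hA₁', hB', rfl⟩ := hU.exists_of_simonCongr_two hw' (h.mono hk)
    obtain ⟨hp, hr, hq⟩ := hU.min_eq_of_simonCongr hU' hk h
    simp only [hA₀', hA₁', hB', coreOf_cons_append_singleton, simonCongr_replicate_iff]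
    refine ⟨hp, hq, ?_, rfl, hr⟩
    simp only [← cons_append, getLast?_concat]
  · rintro ⟨h₀, h₁, hlast, hhead, hcore⟩
    obtain ⟨p', r', q', hU', hA₀', hA₁', hB', rfl⟩ := hU.exists_of_head_getLast hw' hhead.symm
      (by rw [← hlast, ← cons_append, getLast?_concat])
      (fun b => (h₀.mem_iff (by omega) b).symm.trans (by simp [mem_replicate, hp]))
      (fun b => (h₁.mem_iff (by omega) b).symm.trans (by simp [mem_replicate, hq]))
    simp only [hA₀', hA₁', hB', coreOf_cons_append_singleton, simonCongr_replicate_iff]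
      at h₀ h₁ hcore
    exact hU.simonCongr_of_min_eq hU' h₀ hcore h₁

/-- ternary words with one arch whose `α`-factors are both unary
(and modus ≠ reverse modus): `w ∼ₖ w̃` iff the `α`-factors are `(k−1)`-congruent,
the modi and reverse modi coincide, and the cores are `(k−c)`-congruent with
`c = δ_{y ⪯ α₀} + δ_{y ⪯ α₁}`. -/
theorem ternary_both_alpha_unary_congr (k : ℕ) (hk : 1 < k)
    (w w' : List (Fin 3)) (A B A' B' : ℕ → List (Fin 3))
    (hw : IsAlphaBetaFact w 1 A B) (hw' : IsAlphaBetaFact w' 1 A' B')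
    (hiw : iotaUniv w = 1) (hiw' : iotaUniv w' = 1)
    (hcard₀ : (A 0).toFinset.card = 1) (hcard₁ : (A 1).toFinset.card = 1)
    (mw ww : Fin 3)
    (hm : (B 1).getLast? = some mw) (hrm : (B 1).head? = some ww)
    (hne : mw ≠ ww)
    (y : Fin 3) (hy1 : y ≠ mw) (hy2 : y ≠ ww) :
    SimonCongr k w w' ↔
      (SimonCongr (k - 1) (A 0) (A' 0) ∧ SimonCongr (k - 1) (A 1) (A' 1) ∧
        (B 1).getLast? = (B' 1).getLast? ∧ (B 1).head? = (B' 1).head? ∧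
        SimonCongr (k - ((if y ∈ A 0 then 1 else 0) + (if y ∈ A 1 then 1 else 0)))
          (coreOf (B 1)) (coreOf (B' 1))) :=
  ternary_both_alpha_unary_congr_general k hk w w' A B A' B' hw hw' hcard₀ hcard₁ mw ww hm hrm hne y
    hy1 hy2
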